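/- arXiv:2410.10460 — 4 statements merged into one kernel-verified Lean document; each statement's English description precedes it below -/
import Mathlib

section
/- Let M = (S, Act, P) be an MDP, φ ⊆ S a safety property, and σ a shield for φ over the induced LTS T_M. Then every outcome of every policy of the shielded MDP M_σ that starts in a state winning for φ (in T_M) is safe with respect to φ. -/
/-- The enabled actions in a state of an LTS with transition relation `Tr`. -/
def Enabled {S A : Type*} (Tr : S → A → S → Prop) (s : S) : Set A :=
  {a | ∃ s', Tr s a s'}

/-- The transition relation has no dead ends. -/
def NoDeadEnds {S A : Type*} (Tr : S → A → S → Prop) : Prop :=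
  ∀ s, ∃ a s', Tr s a s'

/-- A (nondeterministic) strategy: nonempty sets of enabled actions. -/
def IsStrategy {S A : Type*} (Tr : S → A → S → Prop) (σ : S → Set A) : Prop :=
  ∀ s, (σ s).Nonempty ∧ σ s ⊆ Enabled Tr s

/-- An (infinite) run of the LTS: alternating states and actions following `Tr`. -/
def IsRun {S A : Type*} (Tr : S → A → S → Prop) (st : ℕ → S) (ac : ℕ → A) : Prop :=
  ∀ i, Tr (st i) (ac i) (st (i + 1))

/-- A run is an outcome of a strategy if every action is allowed by the strategy. -/
def IsOutcome {S A : Type*} (σ : S → Set A) (st : ℕ → S) (ac : ℕ → A) : Prop :=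
  ∀ i, ac i ∈ σ (st i)

/-- A run is safe w.r.t. a safety property `φ` if all its states lie in `φ`. -/
def SafeRun {S : Type*} (φ : Set S) (st : ℕ → S) : Prop :=
  ∀ i, st i ∈ φ

/-- A state is winning for `φ` if some strategy has only safe outcomes from it. -/
def WinningState {S A : Type*} (Tr : S → A → S → Prop) (φ : Set S) (s : S) : Prop :=
  ∃ σ, IsStrategy Tr σ ∧
    ∀ st ac, IsRun Tr st ac → IsOutcome σ st ac → st 0 = s → SafeRun φ st

/-- A shield for `φ`: a strategy all of whose outcomes starting in any winning
state are safe. -/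
def IsShield {S A : Type*} (Tr : S → A → S → Prop) (φ : Set S) (σ : S → Set A) : Prop :=
  IsStrategy Tr σ ∧
    ∀ st ac, IsRun Tr st ac → IsOutcome σ st ac →
      WinningState Tr φ (st 0) → SafeRun φ st

/-- The transition relation filtered by an action filter `F` (e.g. a shield):
only transitions whose action is allowed by `F` are kept. -/
def FilterTr {S A : Type*} (Tr : S → A → S → Prop) (F : S → Set A) :
    S → A → S → Prop :=
  fun s a s' => Tr s a s' ∧ a ∈ F s

/-- `P` is (the transition function of) an MDP: values in `[0,1]`, every row sums
to `0` or `1`, and in every state at least one action has row sum `1`. -/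
def IsMDP {S A : Type*} [Fintype S] (P : S → A → S → ℝ) : Prop :=
  (∀ s a s', 0 ≤ P s a s' ∧ P s a s' ≤ 1) ∧
  (∀ s a, (∑ s', P s a s') = 0 ∨ (∑ s', P s a s') = 1) ∧
  (∀ s, ∃ a, (∑ s', P s a s') = 1)

/-- The induced LTS of an MDP: transitions are the positive-probability ones. -/
def InducedTr {S A : Type*} (P : S → A → S → ℝ) : S → A → S → Prop :=
  fun s a s' => 0 < P s a s'

/-- A (probabilistic, memoryless) policy for the MDP `P`: a probability
distribution over the enabled actions in every state. -/
def IsPolicy {S A : Type*} [Fintype A] (P : S → A → S → ℝ) (π : S → A → ℝ) : Prop :=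
  ∀ s, (∀ a, 0 ≤ π s a ∧ π s a ≤ 1) ∧
    (∀ a, a ∉ Enabled (InducedTr P) s → π s a = 0) ∧
    (∑ a, π s a) = 1

/-- The shielded MDP `M_σ`: probabilities of actions not allowed by `σ` are set to `0`. -/
noncomputable def ShieldedP {S A : Type*} (P : S → A → S → ℝ) (σ : S → Set A) :
    S → A → S → ℝ :=
  fun s a s' => (σ s).indicator (fun _ => P s a s') a

theorem inducedTr_shieldedP {S A : Type*} (P : S → A → S → ℝ) (σ : S → Set A) :
    InducedTr (ShieldedP P σ) = FilterTr (InducedTr P) σ := by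
  ext s a s'
  by_cases ha : a ∈ σ s <;> simp [InducedTr, ShieldedP, FilterTr, ha]

theorem isRun_filterTr_iff {S A : Type*} {Tr : S → A → S → Prop} {F : S → Set A}
    {st : ℕ → S} {ac : ℕ → A} :
    IsRun (FilterTr Tr F) st ac ↔ IsRun Tr st ac ∧ IsOutcome F st ac :=
  forall_and

theorem IsShield.safeRun_of_isRun_filterTr {S A : Type*} {Tr : S → A → S → Prop}
    {φ : Set S} {σ : S → Set A} (hσ : IsShield Tr φ σ) {st : ℕ → S} {ac : ℕ → A}
    (hrun : IsRun (FilterTr Tr σ) st ac) (hwin : WinningState Tr φ (st 0)) :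
    SafeRun φ st :=
  let ⟨hrun, hout⟩ := isRun_filterTr_iff.mp hrun
  hσ.2 st ac hrun hout hwin

theorem shielded_mdp_safe_general {S A : Type*}
    (P : S → A → S → ℝ) (φ : Set S)
    (σ : S → Set A) (hσ : IsShield (InducedTr P) φ σ)
    (st : ℕ → S) (ac : ℕ → A)
    (hrun : IsRun (InducedTr (ShieldedP P σ)) st ac)
    (hwin : WinningState (InducedTr P) φ (st 0)) :
    SafeRun φ st := by
  rw [inducedTr_shieldedP] at hrun
  exact hσ.safeRun_of_isRun_filterTr hrun hwin

/-- **A shielded MDP is safe.**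
If `σ` is a shield for `φ` over the induced LTS of the MDP `P`, then every outcome of
every policy of the shielded MDP `M_σ` that starts in a state winning for `φ`
(in the induced LTS) is safe w.r.t. `φ`. -/
theorem shielded_mdp_safe {S A : Type*} [Fintype S] [Fintype A]
    (P : S → A → S → ℝ) (hP : IsMDP P) (φ : Set S)
    (σ : S → Set A) (hσ : IsShield (InducedTr P) φ σ)
    (π : S → A → ℝ) (hπ : IsPolicy (ShieldedP P σ) π)
    (st : ℕ → S) (ac : ℕ → A)
    (hrun : IsRun (InducedTr (ShieldedP P σ)) st ac)
    (hout : ∀ i, 0 < π (st i) (ac i))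
    (hwin : WinningState (InducedTr P) φ (st 0)) :
    SafeRun φ st :=
  shielded_mdp_safe_general P φ σ hσ st ac hrun hwin
end

section
/- Let T be an n-agent LTS with projections prj_i, let φ_i ⊆ S be an agent safety property, and let σ_i be a local shield of agent i, i.e., a shield for the projected LTS T^i with respect to the restricted projection r-prj_i(φ_i). Then every run of the filtered LTS T_{ext(σ_i)} that starts in a state s such that prj_i(s) is winning for r-prj_i(φ_i) in T^i is safe with respect to φ_i. -/
/-- The projection of a global state (a vector over variables `V`) to the
coordinates in `I`. -/
def Prj {V : Type*} {D : V → Type*} (I : Set V) (s : ∀ v, D v) :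
    ∀ v : I, D (v : V) :=
  fun v => s v.1

/-- The extension of a set `ψ` of observations: all global states whose
projection lies in `ψ` (the union of the extensions `⟨o⟩` of its elements). -/
def ExtSet {V : Type*} {D : V → Type*} (I : Set V)
    (ψ : Set (∀ v : I, D (v : V))) : Set (∀ v, D v) :=
  {s | Prj I s ∈ ψ}

/-- The restricted projection of `φ`: those observations `o` whose extension
`⟨o⟩ = {s | Prj I s = o}` is entirely contained in `φ`. -/
def RPrj {V : Type*} {D : V → Type*} (I : Set V) (φ : Set (∀ v, D v)) :
    Set (∀ v : I, D (v : V)) :=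
  {o | ∀ s, Prj I s = o → s ∈ φ}

/-- The transition relation of the projected LTS `T^i` of agent `i`, which
observes the coordinates in `I` and controls the `i`-th action component. -/
def ProjTr {V : Type*} {D : V → Type*} {n : ℕ} {Act : Fin n → Type*}
    (Tr : (∀ v, D v) → (∀ i, Act i) → (∀ v, D v) → Prop)
    (I : Set V) (i : Fin n) :
    (∀ v : I, D (v : V)) → Act i → (∀ v : I, D (v : V)) → Prop :=
  fun o b o' => ∃ s a s', Tr s a s' ∧ Prj I s = o ∧ a i = b ∧ Prj I s' = o'

/-- The extended shield of a local strategy `σi` of agent `i`: it allows all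
global actions whose `i`-th component is allowed by `σi` in the projection. -/
def ExtShield {V : Type*} {D : V → Type*} {n : ℕ} {Act : Fin n → Type*}
    (I : Set V) (i : Fin n)
    (σi : (∀ v : I, D (v : V)) → Set (Act i)) :
    (∀ v, D v) → Set (∀ i, Act i) :=
  fun s => {a | a i ∈ σi (Prj I s)}

/-!
Projecting a run of `T_{ext(σᵢ)}` to agent `i` gives a run of `T^i` that is an outcome of `σᵢ`
from a winning observation, so it stays in `r-prjᵢ(φᵢ)`; and a state whose observation lies in
`r-prjᵢ(φᵢ)` lies in `φᵢ`.
-/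

section FilterTr

variable {S A : Type*} {Tr : S → A → S → Prop} {F : S → Set A} {st : ℕ → S} {ac : ℕ → A}

theorem IsRun.of_filterTr (h : IsRun (FilterTr Tr F) st ac) : IsRun Tr st ac :=
  fun m => (h m).1

theorem IsRun.isOutcome_of_filterTr (h : IsRun (FilterTr Tr F) st ac) : IsOutcome F st ac :=
  fun m => (h m).2

end FilterTr

section Projection

variable {V : Type*} {D : V → Type*} {n : ℕ} {Act : Fin n → Type*} (I : Set V)

theorem mem_of_prj_mem_rPrj {φ : Set (∀ v, D v)} {s : ∀ v, D v} (h : Prj I s ∈ RPrj I φ) :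
    s ∈ φ :=
  h s rfl

theorem SafeRun.of_prj_rPrj {φ : Set (∀ v, D v)} {st : ℕ → ∀ v, D v}
    (h : SafeRun (RPrj I φ) (fun m => Prj I (st m))) : SafeRun φ st :=
  fun m => mem_of_prj_mem_rPrj I (h m)

theorem IsRun.projTr {Tr : (∀ v, D v) → (∀ i, Act i) → (∀ v, D v) → Prop} (i : Fin n)
    {st : ℕ → ∀ v, D v} {ac : ℕ → ∀ j, Act j} (h : IsRun Tr st ac) :
    IsRun (ProjTr Tr I i) (fun m => Prj I (st m)) (fun m => ac m i) :=
  fun m => ⟨st m, ac m, st (m + 1), h m, rfl, rfl, rfl⟩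

theorem isOutcome_extShield_iff (i : Fin n) (σi : (∀ v : I, D (v : V)) → Set (Act i))
    {st : ℕ → ∀ v, D v} {ac : ℕ → ∀ j, Act j} :
    IsOutcome (ExtShield I i σi) st ac ↔
      IsOutcome σi (fun m => Prj I (st m)) (fun m => ac m i) :=
  Iff.rfl

end Projection

theorem extended_local_shield_safe_general
    {V : Type*} {D : V → Type*} {n : ℕ} {Act : Fin n → Type*}
    (Tr : (∀ v, D v) → (∀ i, Act i) → (∀ v, D v) → Prop)
    (I : Set V) (i : Fin n) (φi : Set (∀ v, D v))
    (σi : (∀ v : I, D (v : V)) → Set (Act i))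
    (hσ : IsShield (ProjTr Tr I i) (RPrj I φi) σi)
    (st : ℕ → ∀ v, D v) (ac : ℕ → ∀ j, Act j)
    (hrun : IsRun (FilterTr Tr (ExtShield I i σi)) st ac)
    (hwin : WinningState (ProjTr Tr I i) (RPrj I φi) (Prj I (st 0))) :
    SafeRun φi st := by
  have hprojRun := hrun.of_filterTr.projTr I i
  have hprojOutcome := (isOutcome_extShield_iff I i σi).1 hrun.isOutcome_of_filterTr
  exact SafeRun.of_prj_rPrj I (hσ.2 _ _ hprojRun hprojOutcome hwin)

/-- **Extended local shields are safe, Lemma 2.**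
If `σi` is a local shield of agent `i`, i.e. a shield for the projected LTS `T^i`
w.r.t. the restricted projection `RPrj I φi`, then every run of the filtered LTS
`T_{ext(σi)}` starting in a state whose projection is winning in `T^i` is safe
w.r.t. `φi`. -/
theorem extended_local_shield_safe
    {V : Type*} {D : V → Type*} {n : ℕ} {Act : Fin n → Type*}
    [Finite V] [∀ v, Finite (D v)] [∀ v, Nonempty (D v)] [∀ i, Finite (Act i)]
    (Tr : (∀ v, D v) → (∀ i, Act i) → (∀ v, D v) → Prop) (hT : NoDeadEnds Tr)
    (I : Set V) (i : Fin n) (φi : Set (∀ v, D v))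
    (σi : (∀ v : I, D (v : V)) → Set (Act i))
    (hσ : IsShield (ProjTr Tr I i) (RPrj I φi) σi)
    (st : ℕ → ∀ v, D v) (ac : ℕ → ∀ j, Act j)
    (hrun : IsRun (FilterTr Tr (ExtShield I i σi)) st ac)
    (hwin : WinningState (ProjTr Tr I i) (RPrj I φi) (Prj I (st 0))) :
    SafeRun φi st :=
  extended_local_shield_safe_general Tr I i φi σi hσ st ac hrun hwin
end

section
/- The restricted projection in projection-based shield synthesis cannot be replaced by the standard projection: there exists a 2-agent LTS T with agent safety properties φ_1 = φ_2 = φ and local strategies σ_1, σ_2, where each σ_i is a shield for the projected LTS T^i with respect to the standard projection prj_i(φ_i) (all of its outcomes from winning states stay in prj_i(φ_i)), such that the filtered LTS T_F with F(s) = ext(σ_1)(s) ∩ ext(σ_2)(s) has a run starting in a state winning for φ in T that leaves φ. In particular, such an example is given by S = {0,1}², Act = {z,p}², the transitions from (0,0) being ((0,0),(z,z),(0,0)), ((0,0),(z,p),(0,1)), ((0,0),(p,z),(1,0)), ((0,0),(p,p),(1,1)) (with self-loops added at the other states to avoid dead ends), φ = {(0,0),(0,1),(1,0)}, prj_i projecting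 to the i-th coordinate, and σ_i(0) = {z,p}. -/
/- The concrete 2-agent counterexample.  We encode the state space `{0,1}²` as
`Bool × Bool` (`false ↔ 0`, `true ↔ 1`) and the action space `{z,p}²` as
`Bool × Bool` (`false ↔ z`, `true ↔ p`). -/

/-- The transition relation: from `(0,0)`, the action `(x,y)` leads to the state
`(x,y)` (these are exactly the four listed transitions
`((0,0),(z,z),(0,0))`, `((0,0),(z,p),(0,1))`, `((0,0),(p,z),(1,0))`,
`((0,0),(p,p),(1,1))`); all other states have self-loops under every action,
added to avoid dead ends. -/
def ExTr : Bool × Bool → Bool × Bool → Bool × Bool → Prop :=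
  fun s a s' =>
    (s = (false, false) ∧ s' = a) ∨ (s ≠ (false, false) ∧ s' = s)

/-- The safety property `φ = {(0,0), (0,1), (1,0)}`. -/
def ExPhi : Set (Bool × Bool) := {x | x ≠ (true, true)}

/-- The projected LTS of agent 1 (projection to the first coordinate). -/
def ExProjTr1 : Bool → Bool → Bool → Prop :=
  fun o b o' => ∃ s a s', ExTr s a s' ∧ s.1 = o ∧ a.1 = b ∧ s'.1 = o'

/-- The projected LTS of agent 2 (projection to the second coordinate). -/
def ExProjTr2 : Bool → Bool → Bool → Prop :=
  fun o b o' => ∃ s a s', ExTr s a s' ∧ s.2 = o ∧ a.2 = b ∧ s'.2 = o'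

/-- The local strategy `σᵢ` allowing both actions `{z, p}` in every observation. -/
def ExSigma : Bool → Set Bool := fun _ => Set.univ

/-- The combined action filter `F(s) = ext(σ₁)(s) ∩ ext(σ₂)(s)`. -/
def ExF : Bool × Bool → Set (Bool × Bool) :=
  fun s => {a | a.1 ∈ ExSigma s.1} ∩ {a | a.2 ∈ ExSigma s.2}

/-! The joint action `(p, p)` takes the winning state `(0, 0)` to `(1, 1) ∉ φ`, but no agent
can see this: each projection of `φ` is all of `{0, 1}`, so in a projected LTS every strategy,
in particular the permissive `σᵢ`, is a shield. The state `(0, 0)` is winning because `(z, z)`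
keeps the system there forever. -/

section General

variable {S A : Type*} {Tr : S → A → S → Prop} {σ : S → Set A} {φ : Set S}

theorem IsStrategy.noDeadEnds (hσ : IsStrategy Tr σ) : NoDeadEnds Tr := fun s =>
  let ⟨a, ha⟩ := (hσ s).1
  let ⟨s', h⟩ := (hσ s).2 ha
  ⟨a, s', h⟩

theorem isStrategy_univ [Nonempty A] (h : ∀ s a, a ∈ Enabled Tr s) :
    IsStrategy Tr fun _ => Set.univ :=
  fun s => ⟨Set.univ_nonempty, fun a _ => h s a⟩

theorem isShield_univ_iff : IsShield Tr Set.univ σ ↔ IsStrategy Tr σ :=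
  ⟨And.left, fun hσ => ⟨hσ, fun _ _ _ _ _ _ => Set.mem_univ _⟩⟩

theorem IsRun.mem_of_invariant {I : Set S} {st : ℕ → S} {ac : ℕ → A} (hrun : IsRun Tr st ac)
    (hout : IsOutcome σ st ac) (hI : ∀ s a s', s ∈ I → a ∈ σ s → Tr s a s' → s' ∈ I)
    (h0 : st 0 ∈ I) (i : ℕ) : st i ∈ I := by
  induction i with
  | zero => exact h0
  | succ i ih => exact hI _ _ _ ih (hout i) (hrun i)

theorem winningState_of_invariant {I : Set S} {s : S} (hσ : IsStrategy Tr σ) (hIφ : I ⊆ φ)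
    (hI : ∀ s a s', s ∈ I → a ∈ σ s → Tr s a s' → s' ∈ I) (hs : s ∈ I) :
    WinningState Tr φ s :=
  ⟨σ, hσ, fun _ _ hrun hout h0 i => hIφ (hrun.mem_of_invariant hout hI (h0 ▸ hs) i)⟩

end General

theorem exTr_mem_enabled (s a : Bool × Bool) : a ∈ Enabled ExTr s := by
  by_cases h : s = (false, false)
  · exact ⟨a, Or.inl ⟨h, rfl⟩⟩
  · exact ⟨s, Or.inr ⟨h, rfl⟩⟩

theorem exProjTr1_mem_enabled (o b : Bool) : b ∈ Enabled ExProjTr1 o :=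
  let ⟨s', h⟩ := exTr_mem_enabled (o, false) (b, false)
  ⟨s'.1, _, _, _, h, rfl, rfl, rfl⟩

theorem exProjTr2_mem_enabled (o b : Bool) : b ∈ Enabled ExProjTr2 o :=
  let ⟨s', h⟩ := exTr_mem_enabled (false, o) (false, b)
  ⟨s'.2, _, _, _, h, rfl, rfl, rfl⟩

theorem fst_image_exPhi : Prod.fst '' ExPhi = Set.univ :=
  Set.eq_univ_of_forall fun b => ⟨(b, false), by simp [ExPhi], rfl⟩

theorem snd_image_exPhi : Prod.snd '' ExPhi = Set.univ :=
  Set.eq_univ_of_forall fun b => ⟨(false, b), by simp [ExPhi], rfl⟩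

theorem winningState_exTr_zero : WinningState ExTr ExPhi (false, false) := by
  refine winningState_of_invariant (σ := fun _ => {(false, false)}) (I := {(false, false)})
    (fun s => ⟨Set.singleton_nonempty _, by simpa using exTr_mem_enabled s _⟩)
    (by simp [ExPhi]) ?_ rfl
  rintro s a s' rfl rfl (⟨-, rfl⟩ | ⟨hne, -⟩)
  exacts [rfl, absurd rfl hne]

theorem filterTr_exTr_exF : FilterTr ExTr ExF = ExTr := by
  funext s a s'
  simp [FilterTr, ExF, ExSigma]

theorem isRun_exTr_to_unsafe :
    IsRun ExTr (fun i => if i = 0 then (false, false) else (true, true)) fun _ => (true, true) := by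
  rintro (_ | i)
  · exact Or.inl ⟨rfl, rfl⟩
  · exact Or.inr ⟨by simp, by simp⟩

/-- **Restricted projections are necessary.**
In the above 2-agent LTS with `φ₁ = φ₂ = φ`, the local strategies `σᵢ` are
shields for the projected LTSs `T^i` w.r.t. the *standard* projections
`prjᵢ(φ)`, yet the LTS filtered by `F = ext(σ₁) ∩ ext(σ₂)` has a run starting
in a state winning for `φ` in `T` that leaves `φ`.  Hence the restricted
projection in projection-based shield synthesis cannot be replaced by the
standard projection. -/
theorem standard_projection_insufficient :
    NoDeadEnds ExTr ∧
    IsShield ExProjTr1 (Prod.fst '' ExPhi) ExSigma ∧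
    IsShield ExProjTr2 (Prod.snd '' ExPhi) ExSigma ∧
    WinningState ExTr ExPhi (false, false) ∧
    ∃ st ac, IsRun (FilterTr ExTr ExF) st ac ∧
      st 0 = (false, false) ∧ ¬ SafeRun ExPhi st := by
  refine ⟨(isStrategy_univ exTr_mem_enabled).noDeadEnds, ?_, ?_, winningState_exTr_zero, ?_⟩
  · rw [fst_image_exPhi, isShield_univ_iff]
    exact isStrategy_univ exProjTr1_mem_enabled
  · rw [snd_image_exPhi, isShield_univ_iff]
    exact isStrategy_univ exProjTr2_mem_enabled
  · refine ⟨_, _, filterTr_exTr_exF ▸ isRun_exTr_to_unsafe, rfl, fun h => ?_⟩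
    simpa [ExPhi] using h 1
end

section
/- Let M be an n-agent MDP, let i be an agent, and let J ⊆ {1,...,n} be a set of agent indices with i ∉ J such that agent i does not depend on any agent j ∈ J. Then for any two n-agent policies π = (π_1,...,π_n) and π' = (π'_1,...,π'_n) with π_m = π'_m for all m ∉ J, and for every local run ω of agent i of any finite length ℓ, the probability of observing ω is the same under both policies: Σ_{ρ of length ℓ with prj_i(ρ) = ω} Pr(ρ | π) = Σ_{ρ of length ℓ with prj_i(ρ) = ω} Pr(ρ | π'). (This is the in-distribution property underlying cascading learning: agents not yet instantiated cannot affect the observation distribution of an agent that does not depend on them.) -/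
/-- An agent policy: for every observation, a probability distribution over the
agent's actions. -/
def IsAgentPolicy {O B : Type*} [Fintype B] (p : O → B → ℝ) : Prop :=
  ∀ o, (∀ b, 0 ≤ p o b) ∧ (∑ b, p o b) = 1

/-- The probability `Pr(ρ | π)` of a finite run
`ρ = s₀ a₀ s₁ a₁ … a_{ℓ-1} s_ℓ` under the `n`-agent policy `π`, where the joint
policy is `π(s, a) = ∏ i, π i (prjᵢ s) (a i)`. -/
noncomputable def RunProb {V : Type*} {D : V → Type*} {n : ℕ} {Act : Fin n → Type*}
    (P : (∀ v, D v) → (∀ i, Act i) → (∀ v, D v) → ℝ)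
    (I : Fin n → Set V)
    (π : ∀ i, (∀ v : I i, D (v : V)) → Act i → ℝ)
    (ℓ : ℕ) (st : Fin (ℓ + 1) → ∀ v, D v) (ac : Fin ℓ → ∀ i, Act i) : ℝ :=
  ∏ t : Fin ℓ,
    (∏ i, π i (Prj (I i) (st t.castSucc)) (ac t i)) *
      P (st t.castSucc) (ac t) (st t.succ)

open Classical in
/-- The probability of observing the local run `ω = (os, ob)` of agent `i`:
the sum of `Pr(ρ | π)` over all runs `ρ` of length `ℓ` whose projection to
agent `i` is `ω`. -/
noncomputable def ObsProb {V : Type*} {D : V → Type*} {n : ℕ} {Act : Fin n → Type*}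
    [Fintype V] [DecidableEq V] [∀ v, Fintype (D v)] [∀ i, Fintype (Act i)]
    (P : (∀ v, D v) → (∀ i, Act i) → (∀ v, D v) → ℝ)
    (I : Fin n → Set V)
    (π : ∀ i, (∀ v : I i, D (v : V)) → Act i → ℝ)
    (i : Fin n) (ℓ : ℕ)
    (os : Fin (ℓ + 1) → ∀ v : I i, D (v : V)) (ob : Fin ℓ → Act i) : ℝ :=
  ∑ st : Fin (ℓ + 1) → ∀ v, D v, ∑ ac : Fin ℓ → ∀ j, Act j,
    if (∀ t : Fin ℓ, 0 < P (st t.castSucc) (ac t) (st t.succ)) ∧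
        (∀ t, Prj (I i) (st t) = os t) ∧ (∀ t, ac t i = ob t) then
      RunProb P I π ℓ st ac
    else 0

/-- Agent `i` depends on agent `j` if two `n`-agent policies differing only in
their `j`-th component give a different probability to some local run of
agent `i`. -/
def AgentDependsOn {V : Type*} {D : V → Type*} {n : ℕ} {Act : Fin n → Type*}
    [Fintype V] [DecidableEq V] [∀ v, Fintype (D v)] [∀ i, Fintype (Act i)]
    (P : (∀ v, D v) → (∀ i, Act i) → (∀ v, D v) → ℝ)
    (I : Fin n → Set V) (i j : Fin n) : Prop :=
  ∃ (ℓ : ℕ) (os : Fin (ℓ + 1) → ∀ v : I i, D (v : V)) (ob : Fin ℓ → Act i)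
    (π π' : ∀ m, (∀ v : I m, D (v : V)) → Act m → ℝ),
    (∀ m, IsAgentPolicy (π m)) ∧ (∀ m, IsAgentPolicy (π' m)) ∧
    (∀ m, m ≠ j → π m = π' m) ∧
    ObsProb P I π i ℓ os ob ≠ ObsProb P I π' i ℓ os ob

/-! A hybrid argument: the policies `π` and `π'` are joined by a chain of valid
policies in which consecutive members differ in a single agent of `J`, and by
independence no link of the chain changes the observation probability of
agent `i`. -/

theorem eq_of_invariant_under_single_updates {ι γ : Type*} {β : ι → Type*} [DecidableEq ι]
    (valid : ∀ m, β m → Prop) (F : (∀ m, β m) → γ) (S : Finset ι)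
    (hF : ∀ j ∈ S, ∀ f g : ∀ m, β m, (∀ m, valid m (f m)) → (∀ m, valid m (g m)) →
      (∀ m, m ≠ j → f m = g m) → F f = F g)
    {f g : ∀ m, β m} (hf : ∀ m, valid m (f m)) (hg : ∀ m, valid m (g m))
    (hfg : ∀ m ∉ S, f m = g m) : F f = F g := by
  induction S using Finset.induction_on generalizing f with
  | empty => exact congrArg F (funext fun m => hfg m (Finset.notMem_empty m))
  | @insert j S _ ih =>
    have hupd : ∀ m, valid m (Function.update f j (g j) m) := by
      intro m
      rcases eq_or_ne m j with rfl | hm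
      · simpa using hg m
      · simpa [hm] using hf m
    calc F f = F (Function.update f j (g j)) :=
          hF j (Finset.mem_insert_self j S) _ _ hf hupd
            fun m hm => (Function.update_of_ne hm _ _).symm
      _ = F g := by
          refine ih (fun k hk => hF k (Finset.mem_insert_of_mem hk)) hupd fun m hm => ?_
          rcases eq_or_ne m j with rfl | hmj
          · exact Function.update_self m (g m) f
          · rw [Function.update_of_ne hmj]
            exact hfg m (by simp [hm, hmj])

theorem independent_agents_in_distribution_general
    {V : Type*} {D : V → Type*} {n : ℕ} {Act : Fin n → Type*}
    [Fintype V] [DecidableEq V] [∀ v, Fintype (D v)]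
    [∀ i, Fintype (Act i)]
    (P : (∀ v, D v) → (∀ i, Act i) → (∀ v, D v) → ℝ)
    (I : Fin n → Set V)
    (i : Fin n) (J : Set (Fin n))
    (hdep : ∀ j ∈ J, ¬ AgentDependsOn P I i j)
    (π π' : ∀ m, (∀ v : I m, D (v : V)) → Act m → ℝ)
    (hπ : ∀ m, IsAgentPolicy (π m)) (hπ' : ∀ m, IsAgentPolicy (π' m))
    (hagree : ∀ m, m ∉ J → π m = π' m)
    (ℓ : ℕ) (os : Fin (ℓ + 1) → ∀ v : I i, D (v : V)) (ob : Fin ℓ → Act i) :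
    ObsProb P I π i ℓ os ob = ObsProb P I π' i ℓ os ob := by
  classical
  refine eq_of_invariant_under_single_updates (fun _ p => IsAgentPolicy p)
    (fun ρ => ObsProb P I ρ i ℓ os ob) J.toFinset ?_ hπ hπ'
    fun m hm => hagree m (by simpa using hm)
  intro j hj ρ ρ' hρ hρ' hρρ'
  by_contra hne
  exact hdep j (by simpa using hj) ⟨ℓ, os, ob, ρ, ρ', hρ, hρ', hρρ', hne⟩

/-- **In-distribution property of cascading learning.**
If agent `i` does not depend on any agent in `J` (with `i ∉ J`), then any two
valid `n`-agent policies that agree on all components outside `J` assign the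
same probability to every local run of agent `i` of any finite length. -/
theorem independent_agents_in_distribution
    {V : Type*} {D : V → Type*} {n : ℕ} {Act : Fin n → Type*}
    [Fintype V] [DecidableEq V] [∀ v, Fintype (D v)] [∀ v, Nonempty (D v)]
    [∀ i, Fintype (Act i)] [∀ i, Nonempty (Act i)]
    (P : (∀ v, D v) → (∀ i, Act i) → (∀ v, D v) → ℝ) (hP : IsMDP P)
    (I : Fin n → Set V)
    (i : Fin n) (J : Set (Fin n)) (hiJ : i ∉ J)
    (hdep : ∀ j ∈ J, ¬ AgentDependsOn P I i j)
    (π π' : ∀ m, (∀ v : I m, D (v : V)) → Act m → ℝ)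
    (hπ : ∀ m, IsAgentPolicy (π m)) (hπ' : ∀ m, IsAgentPolicy (π' m))
    (hagree : ∀ m, m ∉ J → π m = π' m)
    (ℓ : ℕ) (os : Fin (ℓ + 1) → ∀ v : I i, D (v : V)) (ob : Fin ℓ → Act i) :
    ObsProb P I π i ℓ os ob = ObsProb P I π' i ℓ os ob :=
  independent_agents_in_distribution_general P I i J hdep π π' hπ hπ' hagree ℓ os ob
end
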